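/- Let N be the total number of codewords of a random code from the two edge type LDPC ensemble with n variable nodes, node-perspective variable degree distribution Λ and check degree distributions Γ^{(1)}, Γ^{(2)}. Then E(N) = Σ_{E1, E2} coef[ Π_{l1,l2} (1 + u1^{l1} u2^{l2})^{n Λ_{l1 l2}}; u1^{E1} u2^{E2} ] · coef[ Π_{r1} q_{r1}(v1)^{m1 Γ^{(1)}_{r1}} Π_{r2} q_{r2}(v2)^{m2 Γ^{(2)}_{r2}}; v1^{E1} v2^{E2} ] / ( C(nΛ'_1(1,1), E1) C(nΛ'_2(1,1), E2) ), where Λ'_j(1,1) = Σ_{l1,l2} l_j Λ_{l1 l2}, m_j = nΛ'_j(1,1)/Γ'^{(j)}(1), and q_r(v) = ((1+v)^r + (1−v)^r)/2. -/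

import Mathlib

open Finset MvPolynomial

/-- Variable-side sockets of a node-degree function `d`. -/
abbrev EdgeSocket (n : ℕ) (d : Fin n → ℕ) := Σ v : Fin n, Fin (d v)

/-- Number of codewords of the two edge type LDPC code determined by the two socket
matchings `π1, π2`: assignments `x` of bits to variable nodes such that every check
node (of either type) has even parity. -/
noncomputable def numCodewords (n c1 c2 : ℕ) (d1 d2 : Fin n → ℕ)
    (g1 : Fin c1 → ℕ) (g2 : Fin c2 → ℕ)
    (π1 : EdgeSocket n d1 ≃ EdgeSocket c1 g1)
    (π2 : EdgeSocket n d2 ≃ EdgeSocket c2 g2) : ℕ :=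
  (Finset.univ.filter (fun x : Fin n → ZMod 2 =>
      (∀ c : Fin c1, ∑ s : Fin (g1 c), x (π1.symm ⟨c, s⟩).1 = 0) ∧
      (∀ c : Fin c2, ∑ s : Fin (g2 c), x (π2.symm ⟨c, s⟩).1 = 0))).card

/-- `q_r` in the variable `X j`, as a bivariate polynomial:
`q_r(v) = ((1+v)^r + (1-v)^r)/2`. -/
noncomputable def qMv (r : ℕ) (j : Fin 2) : MvPolynomial (Fin 2) ℝ :=
  MvPolynomial.C (1 / 2 : ℝ) *
    ((1 + MvPolynomial.X j) ^ r + (1 - MvPolynomial.X j) ^ r)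

/-- The monomial exponent `u1^{E1} u2^{E2}`. -/
noncomputable def mono2 (E1 E2 : ℕ) : Fin 2 →₀ ℕ :=
  Finsupp.single 0 E1 + Finsupp.single 1 E2

/-! Exchanging the order of summation turns the numerator into a sum over words `x` of the number
of pairs of matchings under which `x` satisfies every check. Fix `x` and an edge type: a matching
carries the bits of the variable sockets to a labelling of the check sockets, and it satisfies the
checks iff that labelling has even parity at every check node. Each labelling with as many ones,
`E`, as the variable sockets carry is induced by exactly `E! (T - E)!` matchings, so after dividing
by `T!` every check-even labelling of weight `E` contributes `1 / C(T, E)`. The two coefficients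
count the words `x` of weight `(E1, E2)` and the check-even labellings of weights `E1`, `E2`, since
`q_r(v) = Σ_{y ∈ 𝔽₂^r, Σ y = 0} v^{#ones(y)}`. -/

theorem card_equiv_comp_eq_of_card_fiber_eq {α β ι : Type*} [Fintype α] [Fintype β]
    [DecidableEq α] [DecidableEq β] [Fintype ι] [DecidableEq ι] (a : α → ι) (b : β → ι)
    (h : ∀ i, Fintype.card {x // a x = i} = Fintype.card {y // b y = i}) :
    Fintype.card {e : α ≃ β // b ∘ e = a} = ∏ i, (Fintype.card {x // a x = i}).factorial := by
  -- composing with a fixed label-preserving `e₀` identifies these with the stabiliser of `a`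
  let e₀ : α ≃ β := Equiv.ofFiberEquiv fun i => Fintype.equivOfCardEq (h i)
  have he₀ (y : β) : a (e₀.symm y) = b y :=
    (Equiv.ofFiberEquiv_map _ (e₀.symm y)).symm.trans (congrArg b (e₀.apply_symm_apply y))
  rw [← DomMulAct.stabilizer_card a]
  refine Fintype.card_congr
    (Equiv.subtypeEquiv (Equiv.equivCongr (Equiv.refl α) e₀.symm) fun e => ?_)
  simp only [_root_.funext_iff, Function.comp_apply, Equiv.equivCongr_apply_apply, Equiv.refl_symm,
    Equiv.refl_apply, he₀]

theorem card_subtype_eq_zero_zmod_two {α : Type*} [Fintype α] (a : α → ZMod 2) :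
    Fintype.card {x // a x = 0} = Fintype.card α - #{x | a x = 1} := by
  have h0 (x : α) : a x = 0 ↔ ¬ a x = 1 := by generalize a x = z; decide +revert
  rw [Fintype.card_congr (Equiv.subtypeEquivRight h0), Fintype.card_subtype_compl,
    Fintype.card_subtype]

theorem card_equiv_comp_eq_zmod_two {α β : Type*} [Fintype α] [Fintype β]
    [DecidableEq α] [DecidableEq β] (a : α → ZMod 2) (b : β → ZMod 2)
    (hαβ : Fintype.card α = Fintype.card β) :
    Fintype.card {e : α ≃ β // b ∘ e = a} =
      if #{y | b y = 1} = #{x | a x = 1} then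
        (#{x | a x = 1}).factorial * (Fintype.card α - #{x | a x = 1}).factorial
      else 0 := by
  split_ifs with h
  · have hfiber (i : ZMod 2) : Fintype.card {x // a x = i} = Fintype.card {y // b y = i} := by
      obtain rfl | rfl : i = 0 ∨ i = 1 := by decide +revert
      · rw [card_subtype_eq_zero_zmod_two, card_subtype_eq_zero_zmod_two, h, hαβ]
      · rw [Fintype.card_subtype, Fintype.card_subtype, h]
    rw [card_equiv_comp_eq_of_card_fiber_eq a b hfiber,
      show (univ : Finset (ZMod 2)) = {0, 1} by decide, prod_pair (by decide),
      card_subtype_eq_zero_zmod_two, Fintype.card_subtype, mul_comm]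
  · refine Fintype.card_eq_zero_iff.2 ⟨fun e => h ?_⟩
    rw [← Fintype.card_subtype, ← Fintype.card_subtype]
    exact (Fintype.card_congr (e.1.subtypeEquiv fun x => by rw [← congrFun e.2 x]; rfl)).symm

theorem prod_one_add_eq_sum_zmod_two {σ R : Type*} [Fintype σ] [DecidableEq σ] [CommSemiring R]
    (f : σ → R) : ∏ s, (1 + f s) = ∑ x : σ → ZMod 2, ∏ s with x s = 1, f s := by
  have h (s : σ) : 1 + f s = ∑ b : ZMod 2, if b = 1 then f s else 1 := by
    rw [show (univ : Finset (ZMod 2)) = {0, 1} by decide, sum_pair (by decide), if_neg (by decide),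
      if_pos rfl]
  simp only [h, Fintype.prod_sum, prod_filter]

theorem natCast_card_filter_eq_sum_zmod_two {σ : Type*} [Fintype σ] (y : σ → ZMod 2) :
    (#{s | y s = 1} : ZMod 2) = ∑ s, y s := by
  have h (z : ZMod 2) : z = if z = 1 then 1 else 0 := by decide +revert
  rw [sum_congr rfl fun s _ => h (y s), sum_boole]

theorem sum_eq_zero_iff_even_card_zmod_two {σ : Type*} [Fintype σ] (y : σ → ZMod 2) :
    ∑ s, y s = 0 ↔ Even #{s | y s = 1} := by
  rw [← natCast_card_filter_eq_sum_zmod_two, ZMod.natCast_eq_zero_iff_even]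

theorem card_filter_comp_eq_sum {α β : Type*} [Fintype α] [Fintype β] [DecidableEq β] (f : α → β)
    (p : β → Prop) [DecidablePred p] :
    #{x | p (f x)} = ∑ y with p y, #{x | f x = y} := by
  rw [card_eq_sum_card_fiberwise (f := f) (t := {y | p y}) (fun x hx => by simpa using hx)]
  refine sum_congr rfl fun y hy => ?_
  rw [filter_filter]
  refine congrArg card (filter_congr fun x _ => and_iff_right_of_imp fun h => ?_)
  simpa [h] using hy

theorem sum_sum_card_filter_and {α β γ : Type*} [Fintype α] [Fintype β] [Fintype γ]
    (p : γ → α → Prop) (q : γ → β → Prop) [∀ x a, Decidable (p x a)] [∀ x b, Decidable (q x b)] :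
    ∑ a, ∑ b, #{x | p x a ∧ q x b} = ∑ x, #{a | p x a} * #{b | q x b} := by
  simp only [card_filter, sum_mul_sum, ite_zero_mul_ite_zero, mul_one]
  exact (sum_congr rfl fun _ _ => sum_comm).trans sum_comm

theorem sum_eq_sum_range_sum_range_card_mul {γ : Type*} [Fintype γ] {w1 w2 : γ → ℕ} {T1 T2 : ℕ}
    (h1 : ∀ x, w1 x ≤ T1) (h2 : ∀ x, w2 x ≤ T2) (F : ℕ → ℕ → ℝ) :
    ∑ x, F (w1 x) (w2 x) =
      ∑ E1 ∈ range (T1 + 1), ∑ E2 ∈ range (T2 + 1), #{x | w1 x = E1 ∧ w2 x = E2} * F E1 E2 := by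
  rw [← sum_fiberwise_of_maps_to (g := w1) (t := range (T1 + 1))
    fun x _ => mem_range_succ_iff.2 (h1 x)]
  refine sum_congr rfl fun E1 _ => ?_
  rw [← sum_fiberwise_of_maps_to (g := w2) (t := range (T2 + 1))
    fun x _ => mem_range_succ_iff.2 (h2 x)]
  refine sum_congr rfl fun E2 _ => ?_
  rw [filter_filter, ← nsmul_eq_mul, ← sum_const]
  exact sum_congr rfl fun x hx => by rw [(mem_filter.1 hx).2.1, (mem_filter.1 hx).2.2]

theorem cast_mul_factorial_mul_factorial_div_factorial {T E : ℕ} (N : ℕ) (hE : E ≤ T) :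
    ((N * E.factorial * (T - E).factorial : ℕ) : ℝ) / T.factorial = N / T.choose E := by
  rw [Nat.cast_choose ℝ hE, div_div_eq_mul_div]
  push_cast
  ring

section Sockets

variable {n c : ℕ}

theorem card_edgeSocket (d : Fin n → ℕ) : Fintype.card (EdgeSocket n d) = ∑ v, d v := by
  simp only [Fintype.card_sigma, Fintype.card_fin]

theorem card_edgeSocket_filter_fst (d : Fin n → ℕ) (x : Fin n → ZMod 2) :
    #{t : EdgeSocket n d | x t.1 = 1} = ∑ v with x v = 1, d v := by
  rw [card_filter, ← univ_sigma_univ, sum_sigma, sum_filter]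
  simp [apply_ite]

theorem card_edgeSocket_filter_eq_sum {g : Fin c → ℕ} (b : EdgeSocket c g → ZMod 2) :
    #{t | b t = 1} = ∑ i, #{s | b ⟨i, s⟩ = 1} := by
  simp only [card_filter, ← univ_sigma_univ, sum_sigma]

def ChecksSatisfied {g : Fin c → ℕ} (b : EdgeSocket c g → ZMod 2) : Prop :=
  ∀ i, ∑ s, b ⟨i, s⟩ = 0

instance {g : Fin c → ℕ} : DecidablePred (ChecksSatisfied (g := g)) :=
  fun b => inferInstanceAs (Decidable (∀ i, ∑ s, b ⟨i, s⟩ = 0))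

def satisfyingLabelingCount (g : Fin c → ℕ) (E : ℕ) : ℕ :=
  #{b : EdgeSocket c g → ZMod 2 | ChecksSatisfied b ∧ #{t | b t = 1} = E}

theorem card_matchings (d : Fin n → ℕ) (g : Fin c → ℕ) (hT : ∑ v, d v = ∑ i, g i) :
    Fintype.card (EdgeSocket n d ≃ EdgeSocket c g) = (∑ v, d v).factorial := by
  rw [Fintype.card_equiv (Fintype.equivOfCardEq (by rw [card_edgeSocket, card_edgeSocket, hT])),
    card_edgeSocket]

theorem card_matchings_checksSatisfied (d : Fin n → ℕ) (g : Fin c → ℕ) (x : Fin n → ZMod 2)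
    (hT : ∑ v, d v = ∑ i, g i) :
    #{π : EdgeSocket n d ≃ EdgeSocket c g | ChecksSatisfied fun t => x (π.symm t).1} =
      satisfyingLabelingCount g (∑ v with x v = 1, d v) * (∑ v with x v = 1, d v).factorial *
        (∑ v, d v - ∑ v with x v = 1, d v).factorial := by
  let a : EdgeSocket n d → ZMod 2 := fun t => x t.1
  have hcard : Fintype.card (EdgeSocket n d) = Fintype.card (EdgeSocket c g) := by
    rw [card_edgeSocket, card_edgeSocket, hT]
  have hfiber (b : EdgeSocket c g → ZMod 2) :
      #{π : EdgeSocket n d ≃ EdgeSocket c g | a ∘ π.symm = b} =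
        if #{t | b t = 1} = ∑ v with x v = 1, d v then
          (∑ v with x v = 1, d v).factorial * (∑ v, d v - ∑ v with x v = 1, d v).factorial
        else 0 := by
    simp_rw [Equiv.comp_symm_eq, eq_comm (a := a)]
    rw [← Fintype.card_subtype, card_equiv_comp_eq_zmod_two a b hcard, card_edgeSocket,
      card_edgeSocket_filter_fst]
  -- group the matchings by the labelling `a ∘ π.symm` they induce on the check sockets
  refine (card_filter_comp_eq_sum (fun π : EdgeSocket n d ≃ EdgeSocket c g => a ∘ π.symm)
    ChecksSatisfied).trans ?_
  rw [sum_congr rfl fun b _ => hfiber b, sum_ite, sum_const_zero, add_zero, sum_const, smul_eq_mul,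
    filter_filter, satisfyingLabelingCount, mul_assoc]

end Sockets

theorem sum_sum_numCodewords (n c1 c2 : ℕ) (d1 d2 : Fin n → ℕ) (g1 : Fin c1 → ℕ)
    (g2 : Fin c2 → ℕ) :
    ∑ π1 : EdgeSocket n d1 ≃ EdgeSocket c1 g1, ∑ π2 : EdgeSocket n d2 ≃ EdgeSocket c2 g2,
        numCodewords n c1 c2 d1 d2 g1 g2 π1 π2 =
      ∑ x : Fin n → ZMod 2,
        #{π1 : EdgeSocket n d1 ≃ EdgeSocket c1 g1 | ChecksSatisfied fun t => x (π1.symm t).1} *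
          #{π2 : EdgeSocket n d2 ≃ EdgeSocket c2 g2 | ChecksSatisfied fun t => x (π2.symm t).1} :=
  sum_sum_card_filter_and _ _

theorem qMv_eq_sum (r : ℕ) (j : Fin 2) :
    qMv r j = ∑ y : Fin r → ZMod 2 with ∑ s, y s = 0, X j ^ #{s | y s = 1} := by
  have hpow (z : MvPolynomial (Fin 2) ℝ) :
      (1 + z) ^ r = ∑ y : Fin r → ZMod 2, z ^ #{s | y s = 1} := by
    rw [← Fin.prod_const, prod_one_add_eq_sum_zmod_two]
    simp only [prod_const]
  rw [qMv, sub_eq_add_neg, hpow, hpow, ← sum_add_distrib, mul_sum, sum_filter]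
  refine sum_congr rfl fun y _ => ?_
  simp_rw [sum_eq_zero_iff_even_card_zmod_two]
  split_ifs with h
  · rw [h.neg_pow, ← two_mul, ← mul_assoc, ← map_ofNat C 2, ← C_mul]
    norm_num
  · rw [(Nat.not_even_iff_odd.1 h).neg_pow, add_neg_cancel, mul_zero]

theorem prod_qMv_eq_sum {c : ℕ} (g : Fin c → ℕ) (j : Fin 2) :
    ∏ i, qMv (g i) j =
      ∑ b : EdgeSocket c g → ZMod 2 with ChecksSatisfied b, X j ^ #{t | b t = 1} := by
  simp only [qMv_eq_sum, sum_filter, Fintype.prod_sum, prod_ite_zero]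
  refine Fintype.sum_equiv (Equiv.piCurry fun _ _ => ZMod 2).symm _ _ fun y => ?_
  simp only [mem_univ, true_imp_iff, prod_pow_eq_pow_sum, card_edgeSocket_filter_eq_sum]
  rfl

theorem mono2_eq_mono2_iff (a b E1 E2 : ℕ) : mono2 a b = mono2 E1 E2 ↔ a = E1 ∧ b = E2 := by
  simp [mono2, Finsupp.ext_iff, Fin.forall_fin_two]

theorem coeff_mono2_X_pow_mul_X_pow {R : Type*} [CommSemiring R] (a b E1 E2 : ℕ) :
    coeff (mono2 E1 E2) (X 0 ^ a * X 1 ^ b : MvPolynomial (Fin 2) R) =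
      if a = E1 ∧ b = E2 then 1 else 0 := by
  rw [X_pow_eq_monomial, X_pow_eq_monomial, monomial_mul, one_mul, coeff_monomial]
  exact if_congr (mono2_eq_mono2_iff a b E1 E2) rfl rfl

theorem coeff_mono2_prod_one_add {n : ℕ} (d1 d2 : Fin n → ℕ) (E1 E2 : ℕ) :
    coeff (mono2 E1 E2) (∏ v, (1 + X 0 ^ d1 v * X 1 ^ d2 v) : MvPolynomial (Fin 2) ℝ) =
      #{x : Fin n → ZMod 2 | ∑ v with x v = 1, d1 v = E1 ∧ ∑ v with x v = 1, d2 v = E2} := by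
  simp only [prod_one_add_eq_sum_zmod_two, prod_mul_distrib, prod_pow_eq_pow_sum, coeff_sum,
    coeff_mono2_X_pow_mul_X_pow, sum_boole]

theorem coeff_mono2_prod_qMv_mul_prod_qMv {c1 c2 : ℕ} (g1 : Fin c1 → ℕ) (g2 : Fin c2 → ℕ)
    (E1 E2 : ℕ) :
    coeff (mono2 E1 E2) ((∏ i, qMv (g1 i) 0) * ∏ i, qMv (g2 i) 1) =
      satisfyingLabelingCount g1 E1 * satisfyingLabelingCount g2 E2 := by
  have hboole (P Q : Prop) [Decidable P] [Decidable Q] :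
      (if P ∧ Q then (1 : ℝ) else 0) = (if P then 1 else 0) * (if Q then 1 else 0) := by
    rw [ite_zero_mul_ite_zero, mul_one]
  simp only [prod_qMv_eq_sum, sum_mul_sum, coeff_sum, coeff_mono2_X_pow_mul_X_pow, hboole]
  rw [← sum_mul_sum, sum_boole, sum_boole, satisfyingLabelingCount, satisfyingLabelingCount,
    filter_filter, filter_filter]

/-- The expected number of codewords of the two edge type LDPC ensemble
(uniform independent matchings of type-one and type-two sockets) equals
`Σ_{E1,E2} coef[Π_v (1 + u1^{d1 v} u2^{d2 v}); u1^{E1} u2^{E2}] ·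
coef[Π_c q_{g1 c}(v1) · Π_c q_{g2 c}(v2); v1^{E1} v2^{E2}] / (C(T1,E1) C(T2,E2))`,
where `T_j` is the total number of type-`j` edges.  (Grouping variable nodes by
degree profile `(l1,l2)` and check nodes by degree `r` recovers the products
`Π_{l1,l2}(1+u1^{l1}u2^{l2})^{nΛ_{l1l2}}` and `Π_r q_r(v_j)^{m_j Γ^{(j)}_r}`.) -/
theorem average_number_of_codewords
    (n c1 c2 : ℕ) (d1 d2 : Fin n → ℕ) (g1 : Fin c1 → ℕ) (g2 : Fin c2 → ℕ)
    (hT1 : ∑ v, d1 v = ∑ c, g1 c) (hT2 : ∑ v, d2 v = ∑ c, g2 c) :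
    (let T1 := ∑ v, d1 v
     let T2 := ∑ v, d2 v
     ((∑ π1 : EdgeSocket n d1 ≃ EdgeSocket c1 g1,
        ∑ π2 : EdgeSocket n d2 ≃ EdgeSocket c2 g2,
          (numCodewords n c1 c2 d1 d2 g1 g2 π1 π2 : ℝ)) /
       ((Fintype.card (EdgeSocket n d1 ≃ EdgeSocket c1 g1) : ℝ) *
        (Fintype.card (EdgeSocket n d2 ≃ EdgeSocket c2 g2) : ℝ)))
     = ∑ E1 ∈ Finset.range (T1 + 1), ∑ E2 ∈ Finset.range (T2 + 1),
         MvPolynomial.coeff (mono2 E1 E2)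
             (∏ v : Fin n, (1 + MvPolynomial.X 0 ^ d1 v * MvPolynomial.X 1 ^ d2 v)) *
           (MvPolynomial.coeff (mono2 E1 E2)
               ((∏ c : Fin c1, qMv (g1 c) 0) * (∏ c : Fin c2, qMv (g2 c) 1)) /
             ((T1.choose E1 : ℝ) * (T2.choose E2 : ℝ)))) := by
  intro T1 T2
  have hw1 (x : Fin n → ZMod 2) : ∑ v with x v = 1, d1 v ≤ T1 :=
    sum_le_sum_of_subset (filter_subset _ _)
  have hw2 (x : Fin n → ZMod 2) : ∑ v with x v = 1, d2 v ≤ T2 :=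
    sum_le_sum_of_subset (filter_subset _ _)
  simp only [coeff_mono2_prod_one_add, coeff_mono2_prod_qMv_mul_prod_qMv]
  rw [← sum_eq_sum_range_sum_range_card_mul hw1 hw2 fun E1 E2 =>
      (satisfyingLabelingCount g1 E1 * satisfyingLabelingCount g2 E2 : ℝ) /
        (T1.choose E1 * T2.choose E2), card_matchings d1 g1 hT1, card_matchings d2 g2 hT2]
  simp only [← Nat.cast_sum, sum_sum_numCodewords]
  rw [Nat.cast_sum, sum_div]
  refine sum_congr rfl fun x _ => ?_
  rw [card_matchings_checksSatisfied d1 g1 x hT1, card_matchings_checksSatisfied d2 g2 x hT2,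
    Nat.cast_mul, mul_div_mul_comm, cast_mul_factorial_mul_factorial_div_factorial _ (hw1 x),
    cast_mul_factorial_mul_factorial_div_factorial _ (hw2 x), div_mul_div_comm]
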